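/- Suppose s ∈ (0,1), f satisfies (f1)–(f4) with τ ∈ (0,s) the constant of (f3), let α ∈ (0,1] and let c ∈ (0, s/4). Let (u_n) ⊂ W^{s,2/s}(ℝ²) be a Cerami sequence of I_α at level c, i.e. I_α(u_n) → c and (1+‖u_n‖)·sup{ |I'_α(u_n)v| : v ∈ W^{s,2/s}(ℝ²), ‖v‖ ≤ 1 } → 0 as n → ∞. Then for all sufficiently large n one has ‖u_n‖^{2/s} < s/τ; moreover there exists C > 0 such that for all n: |∫_{ℝ²}∫_{ℝ²} G_α(x−y) F(u_n(x)) F(u_n(y)) dx dy| ≤ C and |∫_{ℝ²} (∫_{ℝ²} G_α(x−y) F(u_n(y)) dy) f(u_n(x)) u_n(x) dx| ≤ C. -/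

import Mathlib

open MeasureTheory Real Filter

noncomputable section

abbrev E2 : Type := EuclideanSpace ℝ (Fin 2)

/-- Primitive of `f` vanishing at `0`. -/
def Fprim (f : ℝ → ℝ) (t : ℝ) : ℝ := ∫ r in (0:ℝ)..t, f r

/-- `j_{2/s}`, the least natural number `≥ 2/s`. -/
def jmin (s : ℝ) : ℕ := sInf {j : ℕ | 2 / s ≤ (j : ℝ)}

/-- The truncated exponential `Φ_{2,s}(t) = e^t - Σ_{j=0}^{j_{2/s}-2} t^j/j!`. -/
def Phi2s (s t : ℝ) : ℝ :=
  Real.exp t - ∑ j ∈ Finset.range (jmin s - 1), t ^ j / (Nat.factorial j : ℝ)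

/-- Assumption (f1). -/
def Cond_f1 (s : ℝ) (f : ℝ → ℝ) : Prop :=
  ContDiff ℝ 1 f ∧ (∀ t, 0 ≤ f t) ∧ (∀ t ≤ (0:ℝ), f t = 0) ∧
    Tendsto (fun t => f t / t ^ (2 / s - 1)) (nhdsWithin 0 (Set.Ioi 0)) (nhds 0)

/-- Assumption (f2), with data `αstar`, `b₁`, `b₂`. -/
def Cond_f2 (s αstar b₁ b₂ : ℝ) (f : ℝ → ℝ) : Prop :=
  0 < αstar ∧ 0 < b₁ ∧ 0 < b₂ ∧
    ∀ t : ℝ, 0 < t → 0 < f t ∧ f t ≤ b₁ + b₂ * Phi2s s (αstar * t ^ (2 / (2 - s)))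

/-- Membership in the fractional Sobolev space `W^{s,2/s}(ℝ²)`. -/
def MemW (s : ℝ) (u : E2 → ℝ) : Prop :=
  MemLp u (ENNReal.ofReal (2 / s)) volume ∧
    Integrable (fun p : E2 × E2 => |u p.1 - u p.2| ^ (2 / s) / ‖p.1 - p.2‖ ^ 4) volume

/-- Weak solution of the Choquard equation (Ch_s). -/
def IsWeakSol (s : ℝ) (f : ℝ → ℝ) (u : E2 → ℝ) : Prop :=
  ∀ φ : E2 → ℝ, MemW s φ →
    (∫ x : E2, ∫ y : E2,
        |u x - u y| ^ (2 / s - 2) * (u x - u y) * (φ x - φ y) / ‖x - y‖ ^ 4)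
      + (∫ x : E2, |u x| ^ (2 / s - 2) * u x * φ x)
    = (1 / (2 * π)) *
        ∫ x : E2, (∫ y : E2, Real.log (1 / ‖x - y‖) * Fprim f (u y)) * f (u x) * φ x

/-- Largest integer strictly less than `q` (as a natural number), for `q > 1`. -/
def genFloor (q : ℝ) : ℕ := (⌈q⌉ - 1).toNat

/-- Generalized factorial `q! = q(q-1)⋯(q-⌊q⌋)`. -/
def genFact (q : ℝ) : ℝ := ∏ i ∈ Finset.range (genFloor q + 1), (q - (i : ℝ))

/-- The constant `μ(s,τ)`. -/
def muST (s τ : ℝ) : ℝ :=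
  min (s / 2)
    ((1 / 2) * ((2 / s - (genFloor (2 / s) : ℝ)) / ((2 / s) * genFact (2 / s))) *
      (τ / s) ^ (s / 2))

/-- Assumption (f3), with parameter `τ`. -/
def Cond_f3 (s τ : ℝ) (f : ℝ → ℝ) : Prop :=
  ∀ t : ℝ, 0 < t →
    1 - s + τ ≤ Fprim f t * deriv f t / (f t) ^ 2 ∧
      Fprim f t * deriv f t / (f t) ^ 2 < 1 + muST s τ

/-- Assumption (f4). -/
def Cond_f4 (f : ℝ → ℝ) : Prop :=
  Tendsto (fun t => Fprim f t * deriv f t / (f t) ^ 2) atTop (nhds 1)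

/-- The threshold `T(s)`. -/
def Tconst (s : ℝ) : ℝ :=
  (π / 18 * ((4 * s ^ 2 + 5 * s + 2) / ((2 + s) * (1 + s))) +
      2 * π ^ 2 / 9 * ((77 * s + 90) / (2 - s))) ^ (-(s / 2))

/-- The constant `β₀`. -/
def beta0 (s : ℝ) : ℝ :=
  (2 ^ 4 * 3 ^ 4 / (π * Real.log 3)) * Tconst s ^ (-(2 / s + 1))

/-- Assumption (f5). -/
def Cond_f5 (s : ℝ) (f : ℝ → ℝ) : Prop :=
  ∃ β : ℝ, beta0 s < β ∧ ∀ t : ℝ, Tconst s < t → β * t ^ (2 / s) ≤ f t * Fprim f t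

/-- Radially symmetric function on `ℝ²`. -/
def Radial (u : E2 → ℝ) : Prop := ∀ x y : E2, ‖x‖ = ‖y‖ → u x = u y

/-- The `W^{s,2/s}` norm `‖u‖ = (‖u‖_{2/s}^{2/s} + [u]_{s,2/s}^{2/s})^{s/2}`. -/
def Wnorm (s : ℝ) (u : E2 → ℝ) : ℝ :=
  ((∫ x : E2, |u x| ^ (2 / s)) +
      ∫ x : E2, ∫ y : E2, |u x - u y| ^ (2 / s) / ‖x - y‖ ^ 4) ^ (s / 2)

/-- The approximating kernel `G_α(x) = (|x|^{-α} - 1)/α`. -/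
def Galpha (α : ℝ) (x : E2) : ℝ := (‖x‖ ^ (-α) - 1) / α

/-- The approximating energy functional `I_α`. -/
def Ifun (s α : ℝ) (f : ℝ → ℝ) (u : E2 → ℝ) : ℝ :=
  (s / 2) * Wnorm s u ^ (2 / s) -
    (1 / (4 * π)) * ∫ x : E2, ∫ y : E2, Galpha α (x - y) * Fprim f (u x) * Fprim f (u y)

/-- The derivative `I'_α(u)v`. -/
def Ider (s α : ℝ) (f : ℝ → ℝ) (u v : E2 → ℝ) : ℝ :=
  (∫ x : E2, ∫ y : E2,
      |u x - u y| ^ (2 / s - 2) * (u x - u y) * (v x - v y) / ‖x - y‖ ^ 4)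
    + (∫ x : E2, |u x| ^ (2 / s - 2) * u x * v x)
    - (1 / (2 * π)) *
        ∫ x : E2, (∫ y : E2, Galpha α (x - y) * Fprim f (u y)) * f (u x) * v x

/-! Test the Cerami condition against `g(uₙ)`, where `g = F/f`. By (f3), `g' = 1 - F f'/f²` takes
values in `(-μ(s,τ), s - τ]` on `(0, ∞)`, and `g` vanishes on `(-∞, 0]`; hence `g` is Lipschitz,
`g(t) ≤ (s - τ) t`, and the fractional `2/s`-Laplacian part of `I'_α(u)(g(u))` is at most
`(s - τ)‖u‖^{2/s}`, while its nonlocal part is `(1/2π)∫∫ G_α F(u) F(u)` because `f g = F`.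
Eliminating the nonlocal term with `I_α(u)` gives `τ‖uₙ‖^{2/s} ≤ 2 I_α(uₙ) + o(1)`, which tends to
`2c < s`. Both nonlocal integrals are then linear combinations of `‖uₙ‖^{2/s}`, `I_α(uₙ)` and
`I'_α(uₙ)uₙ = o(1)`. -/

open Set Topology

section Primitive

variable {f : ℝ → ℝ}

lemma Fprim_of_nonpos (hf0 : ∀ t ≤ (0:ℝ), f t = 0) {t : ℝ} (ht : t ≤ 0) : Fprim f t = 0 := by
  rw [Fprim, intervalIntegral.integral_symm, intervalIntegral.integral_congr (g := fun _ => 0),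
    intervalIntegral.integral_zero, neg_zero]
  intro r hr
  rw [uIcc_of_le ht] at hr
  exact hf0 r hr.2

lemma Fprim_nonneg (hf0 : ∀ t ≤ (0:ℝ), f t = 0) (hfnn : ∀ t, 0 ≤ f t) (t : ℝ) :
    0 ≤ Fprim f t := by
  rcases le_total t 0 with ht | ht
  · rw [Fprim_of_nonpos hf0 ht]
  · exact intervalIntegral.integral_nonneg ht fun x _ => hfnn x

lemma Fprim_pos (hf : Continuous f) (hfpos : ∀ t, 0 < t → 0 < f t) {t : ℝ} (ht : 0 < t) :
    0 < Fprim f t :=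
  intervalIntegral.intervalIntegral_pos_of_pos_on (hf.intervalIntegrable 0 t)
    (fun x hx => hfpos x hx.1) ht

lemma hasDerivAt_Fprim (hf : Continuous f) (t : ℝ) : HasDerivAt (Fprim f) (f t) t :=
  intervalIntegral.integral_hasDerivAt_right (hf.intervalIntegrable 0 t)
    (hf.stronglyMeasurableAtFilter volume _) hf.continuousAt

lemma continuous_Fprim (hf : Continuous f) : Continuous (Fprim f) :=
  continuous_iff_continuousAt.2 fun t => (hasDerivAt_Fprim hf t).continuousAt

end Primitive

lemma muST_pos {s τ : ℝ} (hs0 : 0 < s) (hs1 : s < 1) (hτ : 0 < τ) : 0 < muST s τ := by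
  set q : ℝ := 2 / s
  have hq : 2 < q := by rw [lt_div_iff₀ hs0]; linarith
  have hfloor : (genFloor q : ℝ) = ⌈q⌉ - 1 := by
    have hceil : (2:ℤ) < ⌈q⌉ := Int.lt_ceil.2 (by exact_mod_cast hq)
    rw [genFloor, ← Int.cast_natCast, Int.toNat_of_nonneg (by omega)]
    push_cast
    ring
  have hfrac : 0 < q - genFloor q := by
    linarith [Int.ceil_lt_add_one q]
  have hfact : 0 < genFact q := by
    refine Finset.prod_pos fun i hi => ?_
    have : (i : ℝ) ≤ genFloor q := by exact_mod_cast Nat.lt_succ_iff.1 (Finset.mem_range.1 hi)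
    linarith
  have hrpow : 0 < (τ / s) ^ (s / 2) := Real.rpow_pos_of_pos (div_pos hτ hs0) _
  exact lt_min (by linarith) (by positivity)

/-- `F/f`; where `f` vanishes this is `0`, by the convention `x / 0 = 0`. -/
def Fratio (f : ℝ → ℝ) (t : ℝ) : ℝ := Fprim f t / f t

section Fratio

variable {f : ℝ → ℝ}

lemma Fratio_of_nonpos (hf0 : ∀ t ≤ (0:ℝ), f t = 0) {t : ℝ} (ht : t ≤ 0) : Fratio f t = 0 := by
  rw [Fratio, Fprim_of_nonpos hf0 ht, zero_div]

lemma Fratio_nonneg (hf0 : ∀ t ≤ (0:ℝ), f t = 0) (hfnn : ∀ t, 0 ≤ f t) (t : ℝ) :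
    0 ≤ Fratio f t :=
  div_nonneg (Fprim_nonneg hf0 hfnn t) (hfnn t)

lemma mul_Fratio (hf0 : ∀ t ≤ (0:ℝ), f t = 0) (hfpos : ∀ t, 0 < t → 0 < f t) (t : ℝ) :
    f t * Fratio f t = Fprim f t := by
  rcases le_or_gt t 0 with ht | ht
  · rw [Fratio_of_nonpos hf0 ht, mul_zero, Fprim_of_nonpos hf0 ht]
  · exact mul_div_cancel₀ _ (hfpos t ht).ne'

lemma measurable_Fratio (hf : Continuous f) : Measurable (Fratio f) :=
  (continuous_Fprim hf).measurable.div hf.measurable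

lemma hasDerivAt_Fratio (hf : ContDiff ℝ 1 f) {t : ℝ} (ht : f t ≠ 0) :
    HasDerivAt (Fratio f) (1 - Fprim f t * deriv f t / f t ^ 2) t := by
  refine ((hasDerivAt_Fprim hf.continuous t).div
    (hf.differentiable one_ne_zero t).hasDerivAt ht).congr_deriv ?_
  field_simp

lemma Fratio_sub_le_of_pos (hf : ContDiff ℝ 1 f) (hfpos : ∀ t, 0 < t → 0 < f t) {κ : ℝ}
    (hκ : ∀ t, 0 < t → 1 - κ ≤ Fprim f t * deriv f t / f t ^ 2) {a b : ℝ} (ha : 0 < a)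
    (hab : a ≤ b) : Fratio f b - Fratio f a ≤ κ * (b - a) := by
  have hderiv : ∀ t ∈ Ioi (0:ℝ), HasDerivAt (Fratio f) _ t := fun t ht =>
    hasDerivAt_Fratio hf (hfpos t ht).ne'
  refine (convex_Ioi 0).image_sub_le_mul_sub_of_deriv_le
    (fun t ht => (hderiv t ht).continuousAt.continuousWithinAt)
    (fun t ht => (hderiv t (interior_subset ht)).differentiableAt.differentiableWithinAt)
    (fun t ht => ?_) a ha b (ha.trans_le hab) hab
  rw [interior_Ioi] at ht
  rw [(hderiv t ht).deriv]
  linarith [hκ t ht]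

lemma neg_mul_le_Fratio_sub_of_pos (hf : ContDiff ℝ 1 f) (hfpos : ∀ t, 0 < t → 0 < f t)
    {μ : ℝ} (hμ : ∀ t, 0 < t → Fprim f t * deriv f t / f t ^ 2 ≤ 1 + μ) {a b : ℝ} (ha : 0 < a)
    (hab : a ≤ b) : -μ * (b - a) ≤ Fratio f b - Fratio f a := by
  have hderiv : ∀ t ∈ Ioi (0:ℝ), HasDerivAt (Fratio f) _ t := fun t ht =>
    hasDerivAt_Fratio hf (hfpos t ht).ne'
  refine (convex_Ioi 0).mul_sub_le_image_sub_of_le_deriv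
    (fun t ht => (hderiv t ht).continuousAt.continuousWithinAt)
    (fun t ht => (hderiv t (interior_subset ht)).differentiableAt.differentiableWithinAt)
    (fun t ht => ?_) a ha b (ha.trans_le hab) hab
  rw [interior_Ioi] at ht
  rw [(hderiv t ht).deriv]
  linarith [hμ t ht]

/-- If `F ≥ δ f` on `(0, t₀]`, then `F e^{-t/δ}` is antitone there, so `F` stays away from `0`
near `0⁺`, contradicting `F(0) = 0`. -/
lemma exists_Fratio_lt (hf : Continuous f) (hfpos : ∀ t, 0 < t → 0 < f t) {t₀ δ : ℝ}
    (ht₀ : 0 < t₀) (hδ : 0 < δ) : ∃ t ∈ Ioc 0 t₀, Fratio f t < δ := by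
  by_contra! hge
  have hderiv : ∀ t, HasDerivAt (fun t => Fprim f t * Real.exp (-t / δ))
      (Real.exp (-t / δ) * (f t - Fprim f t / δ)) t := fun t => by
    refine ((hasDerivAt_Fprim hf t).mul ((hasDerivAt_neg t).div_const δ).exp).congr_deriv ?_
    ring
  have hanti : AntitoneOn (fun t => Fprim f t * Real.exp (-t / δ)) (Ioc 0 t₀) := by
    refine antitoneOn_of_deriv_nonpos (convex_Ioc 0 t₀)
      (fun t _ => (hderiv t).continuousAt.continuousWithinAt)
      (fun t _ => (hderiv t).differentiableAt.differentiableWithinAt) fun t ht => ?_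
    rw [interior_Ioc] at ht
    have hft : δ * f t ≤ Fprim f t :=
      (le_div_iff₀ (hfpos t ht.1)).1 (hge t (Ioo_subset_Ioc_self ht))
    rw [(hderiv t).deriv]
    exact mul_nonpos_of_nonneg_of_nonpos (Real.exp_pos _).le
      (by rw [sub_nonpos, le_div_iff₀ hδ]; linarith)
  set b := Fprim f t₀ * Real.exp (-t₀ / δ)
  have hb : 0 < b := mul_pos (Fprim_pos hf hfpos ht₀) (Real.exp_pos _)
  have hsmall : ∀ᶠ t in 𝓝[>] (0:ℝ), Fprim f t < b ∧ t ∈ Ioc 0 t₀ := by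
    have hF : Tendsto (Fprim f) (𝓝[>] 0) (𝓝 0) :=
      ((continuous_Fprim hf).tendsto' 0 0 (by simp [Fprim])).mono_left nhdsWithin_le_nhds
    exact (hF.eventually_lt_const hb).and (Ioc_mem_nhdsGT ht₀)
  obtain ⟨t, hFt, ht⟩ := hsmall.exists
  have hle : b ≤ Fprim f t * Real.exp (-t / δ) := hanti ht (right_mem_Ioc.2 ht₀) ht.2
  have hexp : Real.exp (-t / δ) ≤ 1 := Real.exp_le_one_iff.2 (by
    rw [neg_div]; exact neg_nonpos.2 (div_pos ht.1 hδ).le)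
  nlinarith [Fprim_pos hf hfpos ht.1]

lemma Fratio_le_mul (hf : ContDiff ℝ 1 f) (hfpos : ∀ t, 0 < t → 0 < f t) {κ : ℝ}
    (hκ0 : 0 ≤ κ) (hκ : ∀ t, 0 < t → 1 - κ ≤ Fprim f t * deriv f t / f t ^ 2) {t : ℝ}
    (ht : 0 < t) : Fratio f t ≤ κ * t := by
  refine le_of_forall_pos_lt_add fun δ hδ => ?_
  obtain ⟨x, ⟨hx0, hxt⟩, hx⟩ := exists_Fratio_lt hf.continuous hfpos ht hδ
  have := Fratio_sub_le_of_pos hf hfpos hκ hx0 hxt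
  nlinarith

lemma Fratio_sub_le (hf : ContDiff ℝ 1 f) (hf0 : ∀ t ≤ (0:ℝ), f t = 0)
    (hfpos : ∀ t, 0 < t → 0 < f t) {κ : ℝ} (hκ0 : 0 ≤ κ)
    (hκ : ∀ t, 0 < t → 1 - κ ≤ Fprim f t * deriv f t / f t ^ 2) {a b : ℝ} (hab : a ≤ b) :
    Fratio f b - Fratio f a ≤ κ * (b - a) := by
  rcases le_or_gt a 0 with ha | ha
  · rw [Fratio_of_nonpos hf0 ha, sub_zero]
    rcases le_or_gt b 0 with hb | hb
    · rw [Fratio_of_nonpos hf0 hb]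
      exact mul_nonneg hκ0 (sub_nonneg.2 hab)
    · nlinarith [Fratio_le_mul hf hfpos hκ0 hκ hb]
  · exact Fratio_sub_le_of_pos hf hfpos hκ ha hab

lemma neg_mul_le_Fratio_sub (hf : ContDiff ℝ 1 f) (hf0 : ∀ t ≤ (0:ℝ), f t = 0)
    (hfnn : ∀ t, 0 ≤ f t) (hfpos : ∀ t, 0 < t → 0 < f t) {μ : ℝ} (hμ0 : 0 ≤ μ)
    (hμ : ∀ t, 0 < t → Fprim f t * deriv f t / f t ^ 2 ≤ 1 + μ) {a b : ℝ} (hab : a ≤ b) :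
    -μ * (b - a) ≤ Fratio f b - Fratio f a := by
  rcases le_or_gt a 0 with ha | ha
  · rw [Fratio_of_nonpos hf0 ha, sub_zero]
    nlinarith [Fratio_nonneg hf0 hfnn b]
  · exact neg_mul_le_Fratio_sub_of_pos hf hfpos hμ ha hab

lemma abs_Fratio_sub_le (hf : ContDiff ℝ 1 f) (hf0 : ∀ t ≤ (0:ℝ), f t = 0)
    (hfnn : ∀ t, 0 ≤ f t) (hfpos : ∀ t, 0 < t → 0 < f t) {κ μ : ℝ} (hκ0 : 0 ≤ κ) (hμ0 : 0 ≤ μ)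
    (hκ : ∀ t, 0 < t → 1 - κ ≤ Fprim f t * deriv f t / f t ^ 2)
    (hμ : ∀ t, 0 < t → Fprim f t * deriv f t / f t ^ 2 ≤ 1 + μ) (a b : ℝ) :
    |Fratio f a - Fratio f b| ≤ max κ μ * |a - b| := by
  wlog hab : b ≤ a generalizing a b
  · rw [abs_sub_comm, abs_sub_comm a]
    exact this b a (le_of_not_ge hab)
  have hup := Fratio_sub_le hf hf0 hfpos hκ0 hκ hab
  have hlow := neg_mul_le_Fratio_sub hf hf0 hfnn hfpos hμ0 hμ hab
  rw [abs_of_nonneg (sub_nonneg.2 hab), abs_le]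
  constructor <;> nlinarith [le_max_left κ μ, le_max_right κ μ, sub_nonneg.2 hab]

end Fratio

lemma abs_rpow_sub_two_mul_mul_self {q : ℝ} (hq : q ≠ 0) (a : ℝ) :
    |a| ^ (q - 2) * a * a = |a| ^ q := by
  rcases eq_or_ne a 0 with rfl | ha
  · simp [Real.zero_rpow hq]
  · rw [Real.rpow_sub (abs_pos.2 ha), Real.rpow_two, mul_assoc, ← abs_mul_abs_self a]
    field_simp

lemma rpow_pairing_le {q κ a d : ℝ} (hq : q ≠ 0) (h : a * d ≤ κ * (a * a)) :
    |a| ^ (q - 2) * a * d ≤ κ * |a| ^ q :=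
  calc |a| ^ (q - 2) * a * d = |a| ^ (q - 2) * (a * d) := mul_assoc _ _ _
    _ ≤ |a| ^ (q - 2) * (κ * (a * a)) := mul_le_mul_of_nonneg_left h (by positivity)
    _ = κ * |a| ^ q := by rw [← abs_rpow_sub_two_mul_mul_self hq a]; ring

lemma abs_rpow_pairing_le {q m a d : ℝ} (hq : q ≠ 0) (h : |d| ≤ m * |a|) :
    |(|a| ^ (q - 2) * a * d)| ≤ m * |a| ^ q := by
  calc |(|a| ^ (q - 2) * a * d)| = |a| ^ (q - 2) * |a| * |d| := by
        rw [abs_mul, abs_mul, abs_of_nonneg (by positivity : 0 ≤ |a| ^ (q - 2))]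
    _ ≤ |a| ^ (q - 2) * |a| * (m * |a|) := mul_le_mul_of_nonneg_left h (by positivity)
    _ = m * |a| ^ q := by
        rw [← abs_abs a, ← abs_rpow_sub_two_mul_mul_self hq |a|, abs_abs]; ring

lemma sub_mul_sub_le_of_sub_le_mul {g : ℝ → ℝ} {κ : ℝ}
    (hg : ∀ a b, a ≤ b → g b - g a ≤ κ * (b - a)) (a b : ℝ) :
    (a - b) * (g a - g b) ≤ κ * ((a - b) * (a - b)) := by
  rcases le_total b a with hab | hab
  · nlinarith [hg b a hab, sub_nonneg.2 hab]
  · nlinarith [hg a b hab, sub_nonneg.2 hab]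

lemma integrable_and_integral_le_mul {X : Type*} [MeasurableSpace X] {μ : Measure X} {F G : X → ℝ}
    {K c : ℝ} (hG : Integrable G μ) (hF : AEStronglyMeasurable F μ)
    (hFK : ∀ x, |F x| ≤ K * G x) (hFc : ∀ x, F x ≤ c * G x) :
    Integrable F μ ∧ ∫ x, F x ∂μ ≤ c * ∫ x, G x ∂μ := by
  have hFi : Integrable F μ := (hG.const_mul K).mono' hF (ae_of_all _ hFK)
  refine ⟨hFi, ?_⟩
  rw [← integral_const_mul]
  exact integral_mono hFi (hG.const_mul c) hFc

lemma integrable_and_integral_integral_le_mul {X Y : Type*} [MeasurableSpace X] [MeasurableSpace Y]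
    {μ : Measure X} {ν : Measure Y} [SFinite μ] [SFinite ν] {F G : X → Y → ℝ} {K c : ℝ}
    (hG : Integrable (fun p : X × Y => G p.1 p.2) (μ.prod ν))
    (hF : AEStronglyMeasurable (fun p : X × Y => F p.1 p.2) (μ.prod ν))
    (hFK : ∀ x y, |F x y| ≤ K * G x y) (hFc : ∀ x y, F x y ≤ c * G x y) :
    Integrable (fun p : X × Y => F p.1 p.2) (μ.prod ν) ∧
      ∫ x, ∫ y, F x y ∂ν ∂μ ≤ c * ∫ x, ∫ y, G x y ∂ν ∂μ := by
  obtain ⟨hFi, hle⟩ := integrable_and_integral_le_mul hG hF (fun p => hFK p.1 p.2) fun p => hFc p.1 p.2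
  refine ⟨hFi, ?_⟩
  rwa [integral_integral hFi, integral_integral hG]

lemma div_le_mul_div {A B D m : ℝ} (hD : 0 ≤ D) (h : A ≤ m * B) : A / D ≤ m * (B / D) := by
  rw [← mul_div_assoc]
  exact div_le_div_of_nonneg_right h hD

lemma abs_div_le_mul_div {A B D m : ℝ} (hD : 0 ≤ D) (h : |A| ≤ m * B) :
    |A / D| ≤ m * (B / D) := by
  rw [abs_div, abs_of_nonneg hD]
  exact div_le_mul_div hD h

section FractionalSobolev

variable {s : ℝ}

lemma Wnorm_nonneg (s : ℝ) (v : E2 → ℝ) : 0 ≤ Wnorm s v := by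
  unfold Wnorm
  positivity

lemma Wnorm_rpow (hs : 0 < s) (v : E2 → ℝ) :
    Wnorm s v ^ (2 / s) = (∫ x : E2, |v x| ^ (2 / s)) +
        ∫ x : E2, ∫ y : E2, |v x - v y| ^ (2 / s) / ‖x - y‖ ^ 4 := by
  rw [Wnorm, ← Real.rpow_mul (by positivity), div_mul_div_cancel₀' hs.ne', div_self two_ne_zero,
    Real.rpow_one]

lemma Wnorm_le_mul (hs : 0 < s) {u v : E2 → ℝ} {K : ℝ} (hK : 0 ≤ K)
    (hLp : ∫ x : E2, |v x| ^ (2 / s) ≤ K ^ (2 / s) * ∫ x : E2, |u x| ^ (2 / s))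
    (hGag : ∫ x : E2, ∫ y : E2, |v x - v y| ^ (2 / s) / ‖x - y‖ ^ 4 ≤
      K ^ (2 / s) * ∫ x : E2, ∫ y : E2, |u x - u y| ^ (2 / s) / ‖x - y‖ ^ 4) :
    Wnorm s v ≤ K * Wnorm s u := by
  rw [← Real.rpow_le_rpow_iff (Wnorm_nonneg s v) (mul_nonneg hK (Wnorm_nonneg s u))
    (by positivity : 0 < 2 / s), Real.mul_rpow hK (Wnorm_nonneg s u), Wnorm_rpow hs,
    Wnorm_rpow hs]
  linarith

lemma MemW.integrable_abs_rpow (hs : 0 < s) {u : E2 → ℝ} (hu : MemW s u) :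
    Integrable (fun x => |u x| ^ (2 / s)) := by
  have h := hu.1.integrable_norm_rpow (by simpa using hs) ENNReal.ofReal_ne_top
  simpa [ENNReal.toReal_ofReal (by positivity : 0 ≤ 2 / s)] using h

lemma MemW.comp_lipschitz (hs : 0 < s) {g : ℝ → ℝ} (hgm : Measurable g) (hg0 : g 0 = 0)
    {m : ℝ} (hm : 0 ≤ m) (hg : ∀ a b, |g a - g b| ≤ m * |a - b|) {u : E2 → ℝ}
    (hu : MemW s u) : MemW s (fun x => g (u x)) ∧ Wnorm s (fun x => g (u x)) ≤ m * Wnorm s u := by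
  have hq : 0 < 2 / s := by positivity
  have hgu : ∀ a b, |g a - g b| ^ (2 / s) ≤ m ^ (2 / s) * |a - b| ^ (2 / s) := fun a b => by
    rw [← Real.mul_rpow hm (abs_nonneg _)]
    exact Real.rpow_le_rpow (abs_nonneg _) (hg a b) hq.le
  have hum : AEMeasurable u := hu.1.aestronglyMeasurable.aemeasurable
  have hu₁ : AEMeasurable (fun p : E2 × E2 => u p.1) := hum.comp_fst
  have hu₂ : AEMeasurable (fun p : E2 × E2 => u p.2) := hum.comp_snd
  have hLp_pt : ∀ x, |g (u x)| ^ (2 / s) ≤ m ^ (2 / s) * |u x| ^ (2 / s) := fun x => by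
    simpa [hg0] using hgu (u x) 0
  have hGag_pt : ∀ x y : E2, |g (u x) - g (u y)| ^ (2 / s) / ‖x - y‖ ^ 4 ≤
      m ^ (2 / s) * (|u x - u y| ^ (2 / s) / ‖x - y‖ ^ 4) := fun x y =>
    div_le_mul_div (by positivity) (hgu (u x) (u y))
  have hLp := integrable_and_integral_le_mul (hu.integrable_abs_rpow hs)
    (by fun_prop : AEMeasurable (fun x => |g (u x)| ^ (2 / s))).aestronglyMeasurable
    (fun x => (abs_of_nonneg (by positivity)).trans_le (hLp_pt x)) hLp_pt
  have hGag := integrable_and_integral_integral_le_mul hu.2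
    (by fun_prop : AEMeasurable (fun p : E2 × E2 =>
      |g (u p.1) - g (u p.2)| ^ (2 / s) / ‖p.1 - p.2‖ ^ 4)).aestronglyMeasurable
    (fun x y => (abs_of_nonneg (by positivity)).trans_le (hGag_pt x y)) hGag_pt
  refine ⟨⟨(hu.1.const_mul m).of_le (hgm.comp_aemeasurable hum).aestronglyMeasurable
    (ae_of_all _ fun x => ?_), hGag.1⟩, Wnorm_le_mul hs hm hLp.2 hGag.2⟩
  simpa [abs_mul, abs_of_nonneg hm, hg0] using hg (u x) 0

end FractionalSobolev

def nonlocalEnergy (α : ℝ) (f : ℝ → ℝ) (v : E2 → ℝ) : ℝ :=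
  ∫ x : E2, ∫ y : E2, Galpha α (x - y) * Fprim f (v x) * Fprim f (v y)

def nonlocalPairing (α : ℝ) (f : ℝ → ℝ) (v : E2 → ℝ) : ℝ :=
  ∫ x : E2, (∫ y : E2, Galpha α (x - y) * Fprim f (v y)) * f (v x) * v x

section Functional

variable {s α : ℝ} {f : ℝ → ℝ}

lemma nonlocalEnergy_eq (s : ℝ) (v : E2 → ℝ) :
    nonlocalEnergy α f v = 4 * π * (s / 2 * Wnorm s v ^ (2 / s) - Ifun s α f v) := by
  rw [Ifun, ← nonlocalEnergy]
  field_simp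
  ring

lemma nonlocalPairing_eq (hs : 0 < s) (v : E2 → ℝ) :
    nonlocalPairing α f v = 2 * π * (Wnorm s v ^ (2 / s) - Ider s α f v v) := by
  have hq : 2 / s ≠ 0 := by positivity
  rw [Ider, Wnorm_rpow hs, ← nonlocalPairing]
  simp_rw [abs_rpow_sub_two_mul_mul_self hq]
  field_simp
  ring

lemma Ider_const_mul (u v : E2 → ℝ) (c : ℝ) :
    Ider s α f u (fun x => c * v x) = c * Ider s α f u v := by
  have hGag : ∀ x, ∫ y : E2,
      |u x - u y| ^ (2 / s - 2) * (u x - u y) * (c * v x - c * v y) / ‖x - y‖ ^ 4 =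
      c * ∫ y : E2, |u x - u y| ^ (2 / s - 2) * (u x - u y) * (v x - v y) / ‖x - y‖ ^ 4 :=
    fun x => by rw [← integral_const_mul]; congr 1 with y; ring
  have hLp : ∫ x : E2, |u x| ^ (2 / s - 2) * u x * (c * v x) =
      c * ∫ x : E2, |u x| ^ (2 / s - 2) * u x * v x := by
    rw [← integral_const_mul]; congr 1 with x; ring
  have hNonloc : ∫ x : E2, (∫ y : E2, Galpha α (x - y) * Fprim f (u y)) * f (u x) * (c * v x) =
      c * ∫ x : E2, (∫ y : E2, Galpha α (x - y) * Fprim f (u y)) * f (u x) * v x := by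
    rw [← integral_const_mul]; congr 1 with x; ring
  simp only [Ider, hGag, hLp, hNonloc, integral_const_mul]
  ring

lemma Ider_comp_le (hs : 0 < s) {g : ℝ → ℝ} (hgm : Measurable g) (hg0 : g 0 = 0) {m κ : ℝ}
    (hg : ∀ a b, |g a - g b| ≤ m * |a - b|) (hgκ : ∀ a b, a ≤ b → g b - g a ≤ κ * (b - a))
    (hfg : ∀ t, f t * g t = Fprim f t) {u : E2 → ℝ} (hu : MemW s u) :
    1 / (2 * π) * nonlocalEnergy α f u + Ider s α f u (fun x => g (u x)) ≤
      κ * Wnorm s u ^ (2 / s) := by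
  have hq : 2 / s ≠ 0 := by positivity
  have hum : AEMeasurable u := hu.1.aestronglyMeasurable.aemeasurable
  have hu₁ : AEMeasurable (fun p : E2 × E2 => u p.1) := hum.comp_fst
  have hu₂ : AEMeasurable (fun p : E2 × E2 => u p.2) := hum.comp_snd
  have hGag := integrable_and_integral_integral_le_mul hu.2 (F := fun x y =>
      |u x - u y| ^ (2 / s - 2) * (u x - u y) * (g (u x) - g (u y)) / ‖x - y‖ ^ 4)
    (by fun_prop : AEMeasurable (fun p : E2 × E2 => |u p.1 - u p.2| ^ (2 / s - 2) *
      (u p.1 - u p.2) * (g (u p.1) - g (u p.2)) / ‖p.1 - p.2‖ ^ 4)).aestronglyMeasurable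
    (fun x y => abs_div_le_mul_div (by positivity) (abs_rpow_pairing_le hq (hg _ _)))
    fun x y => div_le_mul_div (by positivity)
      (rpow_pairing_le hq (sub_mul_sub_le_of_sub_le_mul hgκ _ _))
  have hLp := integrable_and_integral_le_mul (hu.integrable_abs_rpow hs)
    (F := fun x => |u x| ^ (2 / s - 2) * u x * g (u x))
    (by fun_prop : AEMeasurable (fun x => |u x| ^ (2 / s - 2) * u x * g (u x))).aestronglyMeasurable
    (fun x => abs_rpow_pairing_le hq (by simpa [hg0] using hg (u x) 0))
    fun x => rpow_pairing_le hq (by simpa [hg0] using sub_mul_sub_le_of_sub_le_mul hgκ (u x) 0)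
  have hNonloc : ∫ x : E2, (∫ y : E2, Galpha α (x - y) * Fprim f (u y)) * f (u x) * g (u x) =
      nonlocalEnergy α f u := by
    rw [nonlocalEnergy]
    congr 1 with x
    rw [mul_assoc, hfg, mul_comm, ← integral_const_mul]
    congr 1 with y
    ring
  rw [Ider, hNonloc, Wnorm_rpow hs]
  linarith [hGag.2, hLp.2]

lemma abs_Ider_le_of_cerami (hs : 0 < s) {u : E2 → ℝ} {e : ℝ}
    (hB : ∀ v, MemW s v → Wnorm s v ≤ 1 → (1 + Wnorm s u) * |Ider s α f u v| ≤ e)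
    {w : E2 → ℝ} (hw : MemW s w) {M : ℝ} (hM : 0 < M) (hwM : Wnorm s w ≤ M * (1 + Wnorm s u)) :
    |Ider s α f u w| ≤ M * e := by
  have hu1 : 0 < 1 + Wnorm s u := by linarith [Wnorm_nonneg s u]
  set c := (M * (1 + Wnorm s u))⁻¹
  have hc : 0 < c := by positivity
  obtain ⟨hv, hvW⟩ := hw.comp_lipschitz hs (measurable_const_mul c) (mul_zero c) hc.le
    (fun a b => by rw [← mul_sub, abs_mul, abs_of_pos hc])
  have hvW1 : Wnorm s (fun x => c * w x) ≤ 1 :=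
    hvW.trans ((mul_le_mul_of_nonneg_left hwM hc.le).trans_eq (inv_mul_cancel₀ (by positivity)))
  have h := hB _ hv hvW1
  have hcM : (1 + Wnorm s u) * c = M⁻¹ := by
    simp only [c]
    field_simp
  rwa [Ider_const_mul, abs_mul, abs_of_pos hc, ← mul_assoc, hcM, inv_mul_le_iff₀ hM] at h

lemma mul_Wnorm_rpow_le_of_cerami {τ : ℝ} (hs0 : 0 < s) (hs1 : s < 1) (hτ0 : 0 < τ)
    (hτs : τ < s) (hf : ContDiff ℝ 1 f) (hfnn : ∀ t, 0 ≤ f t) (hf0 : ∀ t ≤ (0:ℝ), f t = 0)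
    (hfpos : ∀ t, 0 < t → 0 < f t) (hf3 : Cond_f3 s τ f) {u : E2 → ℝ} (hu : MemW s u) {e : ℝ}
    (hB : ∀ v, MemW s v → Wnorm s v ≤ 1 → (1 + Wnorm s u) * |Ider s α f u v| ≤ e) :
    τ * Wnorm s u ^ (2 / s) ≤ 2 * Ifun s α f u + max (s - τ) (muST s τ) * e := by
  have hκ : ∀ t, 0 < t → 1 - (s - τ) ≤ Fprim f t * deriv f t / f t ^ 2 := fun t ht => by
    linarith [(hf3 t ht).1]
  have hμ : ∀ t, 0 < t → Fprim f t * deriv f t / f t ^ 2 ≤ 1 + muST s τ := fun t ht =>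
    (hf3 t ht).2.le
  have hm : 0 < max (s - τ) (muST s τ) := lt_max_of_lt_left (by linarith)
  have hLip := abs_Fratio_sub_le hf hf0 hfnn hfpos (by linarith) (muST_pos hs0 hs1 hτ0).le hκ hμ
  have hgm := measurable_Fratio hf.continuous
  have hg0 := Fratio_of_nonpos hf0 le_rfl
  obtain ⟨hw, hwW⟩ := hu.comp_lipschitz hs0 hgm hg0 hm.le hLip
  have hder := abs_Ider_le_of_cerami hs0 hB hw hm
    (hwW.trans (mul_le_mul_of_nonneg_left (by linarith) hm.le))
  have hkey := Ider_comp_le (α := α) hs0 hgm hg0 hLip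
    (fun a b hab => Fratio_sub_le hf hf0 hfpos (by linarith) hκ hab) (mul_Fratio hf0 hfpos) hu
  have hA : 1 / (2 * π) * nonlocalEnergy α f u = s * Wnorm s u ^ (2 / s) - 2 * Ifun s α f u := by
    rw [nonlocalEnergy_eq s]
    field_simp
    ring
  linarith [neg_abs_le (Ider s α f u fun x => Fratio f (u x))]

lemma max_abs_nonlocal_le (hs0 : 0 < s) (hs2 : s ≤ 2) {v : E2 → ℝ} {R K : ℝ}
    (hW : Wnorm s v ^ (2 / s) ≤ R) (hI : |Ifun s α f v| ≤ K) (hder : |Ider s α f v v| ≤ 1) :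
    max |nonlocalEnergy α f v| |nonlocalPairing α f v| ≤ 4 * π * (R + K + 1) := by
  have hW0 : 0 ≤ Wnorm s v ^ (2 / s) := Real.rpow_nonneg (Wnorm_nonneg s v) _
  have hK : 0 ≤ K := (abs_nonneg _).trans hI
  have hE : |s / 2 * Wnorm s v ^ (2 / s) - Ifun s α f v| ≤ R + K + 1 :=
    (abs_sub _ _).trans (by rw [abs_of_nonneg (by positivity)]; nlinarith)
  have hP : |Wnorm s v ^ (2 / s) - Ider s α f v v| ≤ R + K + 1 :=
    (abs_sub _ _).trans (by rw [abs_of_nonneg hW0]; linarith)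
  rw [nonlocalEnergy_eq s, nonlocalPairing_eq hs0, abs_mul (4 * π), abs_mul (2 * π),
    abs_of_pos (by positivity : (0:ℝ) < 4 * π), abs_of_pos (by positivity : (0:ℝ) < 2 * π)]
  exact max_le (by gcongr) (by nlinarith [Real.pi_pos])

end Functional

lemma exists_pos_forall_le_of_eventually_le {a : ℕ → ℝ} {K : ℝ} (h : ∀ᶠ n in atTop, a n ≤ K) :
    ∃ C, 0 < C ∧ ∀ n, a n ≤ C := by
  obtain ⟨C, hC⟩ := (isBoundedUnder_of_eventually_le h).bddAbove_range
  exact ⟨max C 1, by positivity, fun n => (hC ⟨n, rfl⟩).trans (le_max_left _ _)⟩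

theorem statement_19_general (s α τ c : ℝ) (hs : s ∈ Set.Ioo (0:ℝ) 1)
    (hτ : τ ∈ Set.Ioo (0:ℝ) s) (hc : c ∈ Set.Ioo (0:ℝ) (s / 4))
    (f : ℝ → ℝ) (αstar b₁ b₂ : ℝ)
    (hf1 : Cond_f1 s f) (hf2 : Cond_f2 s αstar b₁ b₂ f)
    (hf3 : Cond_f3 s τ f)
    (u : ℕ → E2 → ℝ) (humem : ∀ n, MemW s (u n))
    (hlevel : Tendsto (fun n => Ifun s α f (u n)) atTop (nhds c))
    (hcerami : ∃ ε : ℕ → ℝ, Tendsto ε atTop (nhds 0) ∧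
        ∀ n : ℕ, ∀ v : E2 → ℝ, MemW s v → Wnorm s v ≤ 1 →
          (1 + Wnorm s (u n)) * |Ider s α f (u n) v| ≤ ε n) :
    (∃ N : ℕ, ∀ n ≥ N, Wnorm s (u n) ^ (2 / s) < s / τ) ∧
    ∃ C : ℝ, 0 < C ∧ ∀ n : ℕ,
      |∫ x : E2, ∫ y : E2, Galpha α (x - y) * Fprim f (u n x) * Fprim f (u n y)| ≤ C ∧
      |∫ x : E2, (∫ y : E2, Galpha α (x - y) * Fprim f (u n y)) * f (u n x) * u n x| ≤ C := by
  obtain ⟨hs0, hs1⟩ := hs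
  obtain ⟨hτ0, hτs⟩ := hτ
  obtain ⟨hf, hfnn, hf0, -⟩ := hf1
  obtain ⟨ε, hε, hεB⟩ := hcerami
  set m := max (s - τ) (muST s τ)
  have hkey : ∀ n, τ * Wnorm s (u n) ^ (2 / s) ≤ 2 * Ifun s α f (u n) + m * ε n := fun n =>
    mul_Wnorm_rpow_le_of_cerami hs0 hs1 hτ0 hτs hf hfnn hf0 (fun t ht => (hf2.2.2.2 t ht).1) hf3
      (humem n) (hεB n)
  have hsmall : ∀ᶠ n in atTop, 2 * Ifun s α f (u n) + m * ε n < s :=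
    ((hlevel.const_mul 2).add (hε.const_mul m)).eventually_lt_const (by linarith [hc.2])
  have hW : ∀ᶠ n in atTop, Wnorm s (u n) ^ (2 / s) < s / τ :=
    hsmall.mono fun n hn => by rw [lt_div_iff₀ hτ0]; linarith [hkey n]
  refine ⟨eventually_atTop.1 hW, ?_⟩
  have hbound : ∀ᶠ n in atTop, max |nonlocalEnergy α f (u n)| |nonlocalPairing α f (u n)| ≤
      4 * π * (s / τ + (|c| + 1) + 1) := by
    filter_upwards [hW, hlevel.abs.eventually_lt_const (lt_add_one |c|),
      hε.eventually_lt_const one_pos] with n hWn hIn hεn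
    have hder : |Ider s α f (u n) (u n)| ≤ 1 * ε n := abs_Ider_le_of_cerami hs0 (hεB n) (humem n)
      one_pos (by linarith [Wnorm_nonneg s (u n)])
    exact max_abs_nonlocal_le hs0 (by linarith) hWn.le hIn.le (by linarith)
  obtain ⟨C, hC, hCb⟩ := exists_pos_forall_le_of_eventually_le hbound
  exact ⟨C, hC, fun n => max_le_iff.1 (hCb n)⟩

theorem statement_19 (s α τ c : ℝ) (hs : s ∈ Set.Ioo (0:ℝ) 1)
    (hα : α ∈ Set.Ioc (0:ℝ) 1) (hτ : τ ∈ Set.Ioo (0:ℝ) s) (hc : c ∈ Set.Ioo (0:ℝ) (s / 4))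
    (f : ℝ → ℝ) (αstar b₁ b₂ : ℝ)
    (hf1 : Cond_f1 s f) (hf2 : Cond_f2 s αstar b₁ b₂ f)
    (hf3 : Cond_f3 s τ f) (hf4 : Cond_f4 f)
    (u : ℕ → E2 → ℝ) (humem : ∀ n, MemW s (u n))
    (hlevel : Tendsto (fun n => Ifun s α f (u n)) atTop (nhds c))
    (hcerami : ∃ ε : ℕ → ℝ, Tendsto ε atTop (nhds 0) ∧
        ∀ n : ℕ, ∀ v : E2 → ℝ, MemW s v → Wnorm s v ≤ 1 →
          (1 + Wnorm s (u n)) * |Ider s α f (u n) v| ≤ ε n) :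
    (∃ N : ℕ, ∀ n ≥ N, Wnorm s (u n) ^ (2 / s) < s / τ) ∧
    ∃ C : ℝ, 0 < C ∧ ∀ n : ℕ,
      |∫ x : E2, ∫ y : E2, Galpha α (x - y) * Fprim f (u n x) * Fprim f (u n y)| ≤ C ∧
      |∫ x : E2, (∫ y : E2, Galpha α (x - y) * Fprim f (u n y)) * f (u n x) * u n x| ≤ C :=
  statement_19_general s α τ c hs hτ hc f αstar b₁ b₂ hf1 hf2 hf3 u humem hlevel hcerami
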